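/- Let I be an SNSAT2 instance and C the implicit CGS constructed from it (as described in the context), with formulas ψ_0 = ⊤ and ψ_{k+1} = ⟨Coal⟩ (¬s) U (s_⊤ ∨ EX(s ∧ EX ¬ψ_k)), where Coal = {A_1^1,...,A_m^n, C_1,...,C_m} and E = ⟨Agt⟩. Let f_I be the memoryless strategy in which every Boolean agent of Coal plays according to the valuation v_I. Then for every i ≤ m and k ≥ i, the following are equivalent: (a) C, q_i ⊨ ψ_k; (b) the strategies f_I witness C, q_i ⊨ ψ_k; (c) the variable z_i evaluates to ⊤ in v_I. -/

import Mathlib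

/-!  Core formalization of concurrent game structures (CGS), alternating
transition systems (ATS), and the logic ATL, following Alur-Henzinger-Kupferman
and Laroussinie-Markey-Oreiby, "On the Expressiveness and Complexity of ATL".

A generic "game structure" `GS Agt Loc P M` has locations labelled by atomic
propositions from `P`, and in each location each agent has a set of available
moves (of type `M`); a joint move (one move per agent) leads to a set of
possible successor locations (a singleton for CGSs, the intersection of the
chosen sets for ATSs). -/

structure GS (Agt Loc P M : Type) where
  lab : Loc → Set P
  mov : Loc → Agt → Set M
  step : Loc → (Agt → M) → Set Loc

namespace GS

variable {Agt Loc P M : Type}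

/-- a complete joint move, valid at `ℓ`. -/
def ValidMove (S : GS Agt Loc P M) (ℓ : Loc) (m : Agt → M) : Prop :=
  ∀ a, m a ∈ S.mov ℓ a

/-- `Next ℓ A mA`: locations reachable from `ℓ` when each member `a` of the
coalition `A` plays `mA a` (and the other agents play arbitrary valid moves). -/
def Next (S : GS Agt Loc P M) (ℓ : Loc) (A : Set Agt) (mA : Agt → M) : Set Loc :=
  {ℓ' | ∃ m, S.ValidMove ℓ m ∧ (∀ a ∈ A, m a = mA a) ∧ ℓ' ∈ S.step ℓ m}

/-- all possible successors of `ℓ`. -/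
def NextAll (S : GS Agt Loc P M) (ℓ : Loc) : Set Loc :=
  {ℓ' | ∃ m, S.ValidMove ℓ m ∧ ℓ' ∈ S.step ℓ m}

/-- the controllable predecessors: `ℓ ∈ CPre A T` iff coalition `A` has a move
forcing the next location to be in `T`. -/
def CPre (S : GS Agt Loc P M) (A : Set Agt) (T : Set Loc) : Set Loc :=
  {ℓ | ∃ mA : Agt → M, (∀ a ∈ A, mA a ∈ S.mov ℓ a) ∧ S.Next ℓ A mA ⊆ T}

theorem cpre_mono (S : GS Agt Loc P M) (A : Set Agt) : Monotone (S.CPre A) := by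
  intro T T' h ℓ hℓ
  obtain ⟨mA, hv, hn⟩ := hℓ
  exact ⟨mA, hv, hn.trans h⟩

/-- A strategy maps the (strict) past history and current location to a move
for each agent (only the moves of the coalition members are relevant). -/
def Strat (Agt Loc M : Type) : Type := List Loc → Loc → Agt → M

def StratValid (S : GS Agt Loc P M) (A : Set Agt) (F : Strat Agt Loc M) : Prop :=
  ∀ h ℓ a, a ∈ A → F h ℓ a ∈ S.mov ℓ a

/-- a strategy is memoryless (state-based) if it only depends on the current
location. -/
def Memoryless (F : Strat Agt Loc M) : Prop :=
  ∀ h h' ℓ a, F h ℓ a = F h' ℓ a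

/-- the history `ρ 0, …, ρ (i-1)`. -/
def hist (ρ : ℕ → Loc) (i : ℕ) : List Loc := List.ofFn (fun j : Fin i => ρ j)

/-- computations from `ℓ`. -/
def Comp (S : GS Agt Loc P M) (ℓ : Loc) (ρ : ℕ → Loc) : Prop :=
  ρ 0 = ℓ ∧ ∀ i, ρ (i + 1) ∈ S.NextAll (ρ i)

/-- the outcomes of a strategy `F` of coalition `A` from `ℓ`. -/
def Out (S : GS Agt Loc P M) (A : Set Agt) (ℓ : Loc) (F : Strat Agt Loc M)
    (ρ : ℕ → Loc) : Prop :=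
  ρ 0 = ℓ ∧ ∀ i, ρ (i + 1) ∈ S.Next (ρ i) A (F (hist ρ i) (ρ i))

end GS

/-! ### ATL syntax and semantics -/

mutual
  /-- ATL state formulas. -/
  inductive SForm (Agt P : Type) : Type where
    | tru : SForm Agt P
    | atom : P → SForm Agt P
    | snot : SForm Agt P → SForm Agt P
    | sor : SForm Agt P → SForm Agt P → SForm Agt P
    | coal : Set Agt → PForm Agt P → SForm Agt P
  /-- ATL path formulas. -/
  inductive PForm (Agt P : Type) : Type where
    | pnot : PForm Agt P → PForm Agt P
    | nxt : SForm Agt P → PForm Agt P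
    | untl : SForm Agt P → SForm Agt P → PForm Agt P
end

mutual
  /-- satisfaction of an ATL state formula at a location. -/
  def SSat {Agt Loc P M : Type} (S : GS Agt Loc P M) : SForm Agt P → Loc → Prop
    | .tru, _ => True
    | .atom p, ℓ => p ∈ S.lab ℓ
    | .snot φ, ℓ => ¬ SSat S φ ℓ
    | .sor φ ψ, ℓ => SSat S φ ℓ ∨ SSat S ψ ℓ
    | .coal A φ, ℓ =>
        ∃ F : GS.Strat Agt Loc M, S.StratValid A F ∧
          ∀ ρ : ℕ → Loc, S.Out A ℓ F ρ → PSat S φ ρ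
  /-- satisfaction of an ATL path formula along a sequence of locations. -/
  def PSat {Agt Loc P M : Type} (S : GS Agt Loc P M) : PForm Agt P → (ℕ → Loc) → Prop
    | .pnot φ, ρ => ¬ PSat S φ ρ
    | .nxt φ, ρ => SSat S φ (ρ 1)
    | .untl φ ψ, ρ => ∃ i, SSat S ψ (ρ i) ∧ ∀ j < i, SSat S φ (ρ j)
end

/-- the release modality:  `φ R ψ := ¬((¬φ) U (¬ψ))`. -/
def PForm.rel {Agt P : Type} (φ ψ : SForm Agt P) : PForm Agt P :=
  .pnot (.untl φ.snot ψ.snot)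

/-- the weak-until modality:  `φ W ψ := ψ R (φ ∨ ψ)`. -/
def PForm.wuntl {Agt P : Type} (φ ψ : SForm Agt P) : PForm Agt P :=
  PForm.rel ψ (φ.sor ψ)

/-- conjunction of state formulas. -/
def SForm.sand {Agt P : Type} (φ ψ : SForm Agt P) : SForm Agt P :=
  .snot (.sor φ.snot ψ.snot)

/-- the set of locations satisfying a state formula. -/
def SatSet {Agt Loc P M : Type} (S : GS Agt Loc P M) (φ : SForm Agt P) : Set Loc :=
  {ℓ | SSat S φ ℓ}

/-! ### Concurrent game structures (explicit) and alternating transition systems -/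

/-- an (explicit) concurrent game structure: moves are natural numbers, and the
transition table gives the successor of each joint move. -/
structure CGS (Agt Loc P : Type) where
  lab : Loc → Set P
  chc : Loc → Agt → Finset ℕ
  edg : Loc → (Agt → ℕ) → Loc

namespace CGS

variable {Agt Loc P : Type}

def WellFormed (G : CGS Agt Loc P) : Prop := ∀ ℓ a, (G.chc ℓ a).Nonempty

def toGS (G : CGS Agt Loc P) : GS Agt Loc P ℕ where
  lab := G.lab
  mov ℓ a := ↑(G.chc ℓ a)
  step ℓ m := {G.edg ℓ m}

/-- a CGS is turn-based if in every location at most one agent has more than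
one available move. -/
def TurnBased (G : CGS Agt Loc P) : Prop :=
  ∀ ℓ (a b : Agt), 1 < (G.chc ℓ a).card → 1 < (G.chc ℓ b).card → a = b

end CGS

/-- an alternating transition system: a move of an agent is a set of locations;
a joint move leads to the intersection of the chosen sets (a singleton when the
ATS is well-formed). -/
structure ATS (Agt Loc P : Type) where
  lab : Loc → Set P
  chc : Loc → Agt → Set (Set Loc)

namespace ATS

variable {Agt Loc P : Type}

/-- well-formedness: each agent always has some available move, and each joint
choice of moves intersects in a singleton. -/
def WellFormed (T : ATS Agt Loc P) : Prop :=
  (∀ ℓ a, (T.chc ℓ a).Nonempty) ∧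
  ∀ ℓ (Q : Agt → Set Loc), (∀ a, Q a ∈ T.chc ℓ a) → ∃ ℓ', (⋂ a, Q a) = {ℓ'}

def toGS (T : ATS Agt Loc P) : GS Agt Loc P (Set Loc) where
  lab := T.lab
  mov := T.chc
  step _ Q := ⋂ a, Q a

end ATS

/-! ### Implicit concurrent game structures -/

/-- boolean formulas over atoms `A_j = c` ("agent `A_j` plays move `c`"). -/
inductive MoveForm (Agt : Type) : Type where
  | tt : MoveForm Agt
  | ff : MoveForm Agt
  | isEq : Agt → ℕ → MoveForm Agt
  | neg : MoveForm Agt → MoveForm Agt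
  | conj : MoveForm Agt → MoveForm Agt → MoveForm Agt
  | disj : MoveForm Agt → MoveForm Agt → MoveForm Agt

/-- evaluation of a move formula under a joint move. -/
def MoveForm.eval {Agt : Type} (m : Agt → ℕ) : MoveForm Agt → Bool
  | .tt => true
  | .ff => false
  | .isEq a c => m a == c
  | .neg φ => ! φ.eval m
  | .conj φ ψ => φ.eval m && ψ.eval m
  | .disj φ ψ => φ.eval m || ψ.eval m

/-- an implicit CGS: in each location, the transition function is given by a
finite list of guarded targets `(φ, ℓ')`; the successor under a joint move is
the target of the first guard that evaluates to true. -/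
structure ICGS (Agt Loc P : Type) where
  lab : Loc → Set P
  chc : Loc → Agt → Finset ℕ
  trans : Loc → List (MoveForm Agt × Loc)

namespace ICGS

variable {Agt Loc P : Type}

/-- the transition function determined by the guarded lists. -/
def edg (G : ICGS Agt Loc P) (ℓ : Loc) (m : Agt → ℕ) : Loc :=
  match (G.trans ℓ).find? (fun e => e.1.eval m) with
  | some e => e.2
  | none => ℓ

def toCGS (G : ICGS Agt Loc P) : CGS Agt Loc P :=
  ⟨G.lab, G.chc, G.edg⟩

def toGS (G : ICGS Agt Loc P) : GS Agt Loc P ℕ := G.toCGS.toGS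

/-- well-formedness: every agent always has an available move, and in each
location the last guard of the transition list is `⊤` (hence no joint move can
produce a deadlock). -/
def WellFormed (G : ICGS Agt Loc P) : Prop :=
  (∀ ℓ a, (G.chc ℓ a).Nonempty) ∧
  ∀ ℓ, ∃ ℓ' : Loc, (G.trans ℓ).getLast? = some (MoveForm.tt, ℓ')

end ICGS

/-! ### Boolean formulas (for QBF-style instances) -/

/-- boolean formulas over a set `V` of variables. -/
inductive BForm (V : Type) : Type where
  | var : V → BForm V
  | bnot : BForm V → BForm V
  | band : BForm V → BForm V → BForm V
  | bor : BForm V → BForm V → BForm V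

/-- evaluation of a boolean formula under a valuation. -/
def BForm.eval {V : Type} (g : V → Bool) : BForm V → Bool
  | .var v => g v
  | .bnot φ => ! φ.eval g
  | .band φ ψ => φ.eval g && ψ.eval g
  | .bor φ ψ => φ.eval g || ψ.eval g

/-- substituting a move formula for each variable. -/
def BForm.subst {V Agt : Type} (σ : V → MoveForm Agt) : BForm V → MoveForm Agt
  | .var v => σ v
  | .bnot φ => .neg (φ.subst σ)
  | .band φ ψ => .conj (φ.subst σ) (ψ.subst σ)
  | .bor φ ψ => .disj (φ.subst σ) (ψ.subst σ)

/-! ### Statement 15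

The implicit CGS associated with an SNSAT₂ instance
`z_i := ∃X_i. ∀Y_i. φ_i(z_0,…,z_{i-1}, X_i, Y_i)` (`i < m`, each family of
size `n`), and the `Δ₃`-hardness formulas
`ψ_0 = ⊤`, `ψ_{k+1} = ⟨Coal⟩ (¬s) U (s_⊤ ∨ EX(s ∧ EX ¬ψ_k))`. -/

/-- agents: `A_i^j`, `B_i^j`, `C_i`, and `D`. -/
abbrev SnAgt (m n : ℕ) : Type := ((Fin m × Fin n) ⊕ (Fin m × Fin n)) ⊕ (Fin m ⊕ Unit)
/-- locations: `q_i`, `q̄_i`, `s_i`, `q_⊤` (`.inr true`), `q_⊥` (`.inr false`). -/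
abbrev SnLoc (m : ℕ) : Type := (Fin m ⊕ (Fin m ⊕ Fin m)) ⊕ Bool
/-- variables of the instance: `x_i^j`, `y_i^j` (of the ambient family `i`),
and `z_k`. -/
abbrev SnVar (m n : ℕ) : Type := (Fin n ⊕ Fin n) ⊕ Fin m

variable {m n : ℕ}

def snA (i : Fin m) (j : Fin n) : SnAgt m n := .inl (.inl (i, j))
def snB (i : Fin m) (j : Fin n) : SnAgt m n := .inl (.inr (i, j))
def snC (k : Fin m) : SnAgt m n := .inr (.inl k)
def snD : SnAgt m n := .inr (.inr ())

def snQ (i : Fin m) : SnLoc m := .inl (.inl i)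
def snQbar (i : Fin m) : SnLoc m := .inl (.inr (.inl i))
def snS (i : Fin m) : SnLoc m := .inl (.inr (.inr i))
def snTop : SnLoc m := .inr true
def snBot : SnLoc m := .inr false

/-- substitution `x_i^j ← (A_i^j = 1)`, `y_i^j ← (B_i^j = 1)`,
`z_k ← (C_k = 1)`. -/
def snSubst (i : Fin m) : SnVar m n → MoveForm (SnAgt m n)
  | .inl (.inl j) => .isEq (snA i j) 1
  | .inl (.inr j) => .isEq (snB i j) 1
  | .inr k => .isEq (.inr (.inl k)) 1

/-- the implicit CGS of the `Δ₃`-hardness reduction.  Atomic propositions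
(`Fin 3`): `0 = s_⊤` (labels `q_⊤`), `1 = s_⊥` (labels `q_⊥`), `2 = s`
(labels the states `s_i`).  The boolean agents always have the two moves
`{0, 1}`; `D` has the `m` moves `{0, …, m-1}`.  From `q_i`, if `D` plays `0`
the run goes to `q_⊤` or `q_⊥` according to the truth value of `φ_i` under the
moves of the boolean agents; if `D` plays `k + 1` with `k < i` it challenges
`C_k`, going to `q_k` if `C_k` plays `1` and to `q̄_k` otherwise; in the
remaining cases the run goes to `q_⊤`.  Moreover `q̄_i` goes to `s_i`, `s_i`
to `q_i`, and `q_⊤`, `q_⊥` carry self-loops. -/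
def snsat2ICGS (φ : Fin m → BForm (SnVar m n)) :
    ICGS (SnAgt m n) (SnLoc m) (Fin 3) where
  lab ℓ :=
    match ℓ with
    | .inr true => {(0 : Fin 3)}
    | .inr false => {(1 : Fin 3)}
    | .inl (.inr (.inr _)) => {(2 : Fin 3)}
    | _ => ∅
  chc _ ag :=
    match ag with
    | .inr (.inr _) => Finset.range m
    | _ => {0, 1}
  trans ℓ :=
    match ℓ with
    | .inl (.inl i) =>
        [(.conj (.isEq snD 0) ((φ i).subst (snSubst i)), snTop),
         (.isEq snD 0, snBot)]
        ++ ((List.finRange m).filter (fun (k : Fin m) => decide ((k : ℕ) < (i : ℕ)))).flatMap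
            (fun (k : Fin m) =>
              [(.conj (.isEq snD ((k : ℕ) + 1)) (.isEq (.inr (.inl k)) 1), snQ k),
               (.conj (.isEq snD ((k : ℕ) + 1)) (.isEq (.inr (.inl k)) 0), snQbar k)])
        ++ [(.tt, snTop)]
    | .inl (.inr (.inl i)) => [(.tt, snS i)]
    | .inl (.inr (.inr i)) => [(.tt, snQ i)]
    | .inr b => [(.tt, .inr b)]

/-- the coalition `Coal = {A_1^1, …, A_m^n, C_1, …, C_m}`. -/
def snCoal : Set (SnAgt m n) :=
  {ag | (∃ x, ag = .inl (.inl x)) ∨ ∃ k : Fin m, ag = .inr (.inl k)}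

/-- `E X θ  =  ⟨Agt⟩ X θ`. -/
def snEX (θ : SForm (SnAgt m n) (Fin 3)) : SForm (SnAgt m n) (Fin 3) :=
  .coal Set.univ (.nxt θ)

/-- the path formula `(¬s) U (s_⊤ ∨ EX(s ∧ EX ¬θ))`. -/
def snPsiPath (θ : SForm (SnAgt m n) (Fin 3)) : PForm (SnAgt m n) (Fin 3) :=
  .untl (.snot (.atom 2))
    (.sor (.atom 0) (snEX (SForm.sand (.atom 2) (snEX (.snot θ)))))

/-- the formulas `ψ_0 = ⊤`, `ψ_{k+1} = ⟨Coal⟩ (¬s) U (s_⊤ ∨ EX(s ∧ EX ¬ψ_k))`. -/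
def snPsi : ℕ → SForm (SnAgt m n) (Fin 3)
  | 0 => .tru
  | k + 1 => .coal snCoal (snPsiPath (snPsi k))

/-- the memoryless strategy `f_I` where every boolean agent of the coalition
plays according to the valuation `v_I` (given by `vz` on the `z_i` and `vx`
on the `x_i^j`). -/
def snFI (vz : Fin m → Bool) (vx : Fin m → Fin n → Bool) :
    GS.Strat (SnAgt m n) (SnLoc m) ℕ :=
  fun _ _ ag =>
    match ag with
    | .inl (.inl (i, j)) => if vx i j then 1 else 0
    | .inl (.inr _) => 0
    | .inr (.inl k) => if vz k then 1 else 0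
    | .inr (.inr _) => 0

/-!
Induction on `i`. If `v_I(z_i) = ⊤`, the strategy `f_I` wins from `q_i`: when `D` plays `0`
the witness for `X_i` makes `φ_i` true and the run enters `q_⊤`; when `D` challenges `C_k`, either
`v_I(z_k) = ⊤` and the run moves to `q_k`, where the same argument applies, or `v_I(z_k) = ⊥`
and the run moves to `q̄_k`, whose successor `s_k` leads to `q_k`, where `ψ` fails by induction,
so `EX(s ∧ EX ¬ψ)` holds at `q̄_k`. Conversely, if some strategy `F` wins from `q_i`, its move
for each `C_j` (`j < i`) must be `v_I(z_j)`, since a wrong value is punished by a challenge of `D`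
(by induction at `q_j`); then the moves of `F` for `X_i` witness `z_i`, for otherwise the
opponents answer with a falsifying `Y_i` and `D = 0`, trapping the run in `q_⊥`.
-/

theorem ite_one_zero_beq_one (b : Bool) : ((if b then 1 else 0 : ℕ) == 1) = b := by
  cases b <;> rfl

theorem mem_zero_one_iff_le_one (c : ℕ) : c ∈ ({0, 1} : Finset ℕ) ↔ c ≤ 1 := by
  simp only [Finset.mem_insert, Finset.mem_singleton]
  omega

theorem BForm.eval_subst {V Agt : Type} (σ : V → MoveForm Agt) (mv : Agt → ℕ) (ψ : BForm V) :
    (ψ.subst σ).eval mv = ψ.eval (fun v => (σ v).eval mv) := by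
  induction ψ with
  | var v => rfl
  | bnot ψ ih => simp only [BForm.subst, BForm.eval, MoveForm.eval, ih]
  | band ψ χ ih₁ ih₂ => simp only [BForm.subst, BForm.eval, MoveForm.eval, ih₁, ih₂]
  | bor ψ χ ih₁ ih₂ => simp only [BForm.subst, BForm.eval, MoveForm.eval, ih₁, ih₂]

namespace ICGS

variable {Agt Loc P : Type}

theorem edg_eq_of_trans_eq_append (G : ICGS Agt Loc P) {ℓ ℓ' : Loc} {mv : Agt → ℕ}
    {pre post : List (MoveForm Agt × Loc)} (htrans : G.trans ℓ = pre ++ post)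
    (hfire : ∃ e ∈ pre, e.1.eval mv) (huniq : ∀ e ∈ pre, e.1.eval mv → e.2 = ℓ') :
    G.edg ℓ mv = ℓ' := by
  obtain ⟨e, he⟩ := Option.isSome_iff_exists.mp (List.find?_isSome.mpr hfire)
  have hfind : (G.trans ℓ).find? (fun e => e.1.eval mv) = some e := by
    rw [htrans, List.find?_append, he, Option.some_or]
  have he_fires := List.find?_some he
  rw [edg, hfind]
  exact huniq e (List.mem_of_find?_eq_some he) he_fires

theorem edg_mem_targets (G : ICGS Agt Loc P) (ℓ : Loc) (mv : Agt → ℕ) :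
    G.edg ℓ mv ∈ (G.trans ℓ).map Prod.snd ∨ G.edg ℓ mv = ℓ := by
  unfold edg
  split
  · exact .inl (List.mem_map_of_mem (List.mem_of_find?_eq_some ‹_›))
  · exact .inr rfl

end ICGS

theorem sSat_sand {Agt Loc P M : Type} {S : GS Agt Loc P M} {φ ψ : SForm Agt P} {ℓ : Loc} :
    SSat S (φ.sand ψ) ℓ ↔ SSat S φ ℓ ∧ SSat S ψ ℓ := by
  simp only [SForm.sand, SSat]
  tauto

namespace GS

variable {Agt Loc P M : Type}

theorem hist_zero (ρ : ℕ → Loc) : hist ρ 0 = [] := rfl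

theorem hist_succ (ρ : ℕ → Loc) (t : ℕ) : hist ρ (t + 1) = hist ρ t ++ [ρ t] :=
  List.ofFn_succ_last

theorem hist_cons_succ (ℓ : Loc) (ρ : ℕ → Loc) (t : ℕ) :
    hist (Stream'.cons ℓ ρ) (t + 1) = ℓ :: hist ρ t :=
  List.ofFn_succ

theorem Out.tail {S : GS Agt Loc P M} {A : Set Agt}
    {F : Strat Agt Loc M} (hF : Memoryless F) {ℓ : Loc} {ρ : ℕ → Loc}
    (hout : S.Out A ℓ F ρ) : S.Out A (ρ 1) F (fun t => ρ (t + 1)) :=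
  ⟨rfl, fun t => by
    have hFt : F (hist ρ (t + 1)) (ρ (t + 1)) = F (hist (fun t => ρ (t + 1)) t) (ρ (t + 1)) :=
      funext (hF _ _ _)
    show ρ (t + 2) ∈ S.Next (ρ (t + 1)) A _
    rw [← hFt]
    exact hout.2 (t + 1)⟩

def Witnesses (S : GS Agt Loc P M) (A : Set Agt) (F : Strat Agt Loc M) (φ : PForm Agt P)
    (ℓ : Loc) : Prop :=
  S.StratValid A F ∧ ∀ ρ, S.Out A ℓ F ρ → PSat S φ ρ

theorem Witnesses.tail {S : GS Agt Loc P M} {A : Set Agt} {F : Strat Agt Loc M}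
    {φ ψ : SForm Agt P} {ℓ ℓ' : Loc} (hw : S.Witnesses A F (.untl φ ψ) ℓ)
    (hψ : ¬ SSat S ψ ℓ) (hstep : ℓ' ∈ S.Next ℓ A (F [] ℓ)) :
    S.Witnesses A (fun h => F (ℓ :: h)) (.untl φ ψ) ℓ' := by
  refine ⟨fun h => hw.1 (ℓ :: h), fun ρ ⟨hρ0, hρ⟩ => ?_⟩
  have hout : S.Out A ℓ F (Stream'.cons ℓ ρ) := by
    refine ⟨rfl, fun t => ?_⟩
    cases t with
    | zero => rw [← hρ0] at hstep; exact hstep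
    | succ t => rw [hist_cons_succ]; exact hρ t
  obtain ⟨t, hψt, hφt⟩ := hw.2 _ hout
  cases t with
  | zero => exact absurd hψt hψ
  | succ t => exact ⟨t, hψt, fun j hj => hφt (j + 1) (by omega)⟩

end GS

namespace CGS

variable {Agt Loc P : Type} (G : CGS Agt Loc P)

theorem mem_next_iff {ℓ ℓ' : Loc} {A : Set Agt} {mA : Agt → ℕ} :
    ℓ' ∈ G.toGS.Next ℓ A mA ↔
      ∃ mv, G.toGS.ValidMove ℓ mv ∧ (∀ a ∈ A, mv a = mA a) ∧ ℓ' = G.edg ℓ mv :=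
  Iff.rfl

theorem out_succ_eq {G : CGS Agt Loc P} {A : Set Agt}
    {F : GS.Strat Agt Loc ℕ} {ℓ ℓ' : Loc} {ρ : ℕ → Loc} (hout : G.toGS.Out A ℓ F ρ) (t : ℕ)
    (h : ∀ mv, G.edg (ρ t) mv = ℓ') : ρ (t + 1) = ℓ' := by
  obtain ⟨mv, -, -, hρ⟩ := hout.2 t
  exact (hρ : ρ (t + 1) = _).trans (h mv)

theorem exists_out {A : Set Agt} {F : GS.Strat Agt Loc ℕ} (ℓ : Loc) (E : GS.Strat Agt Loc ℕ)
    (hE : ∀ h ℓ, G.toGS.ValidMove ℓ (E h ℓ)) (hEF : ∀ h ℓ, ∀ a ∈ A, E h ℓ a = F h ℓ a) :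
    ∃ ρ, G.toGS.Out A ℓ F ρ ∧ ∀ t, ρ (t + 1) = G.edg (ρ t) (E (GS.hist ρ t) (ρ t)) := by
  let run : ℕ → List Loc × Loc := fun t =>
    Nat.rec ([], ℓ) (fun _ p => (p.1 ++ [p.2], G.edg p.2 (E p.1 p.2))) t
  let ρ : ℕ → Loc := fun t => (run t).2
  have hrun : ∀ t, (run t).1 = GS.hist ρ t := by
    intro t
    induction t with
    | zero => rfl
    | succ t ih => rw [GS.hist_succ, ← ih]
  have hstep : ∀ t, ρ (t + 1) = G.edg (ρ t) (E (GS.hist ρ t) (ρ t)) := fun t => by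
    rw [← hrun]
  exact ⟨ρ, ⟨rfl, fun t => ⟨_, hE _ _, hEF _ _, hstep t⟩⟩, hstep⟩

theorem WellFormed.exists_validMove {G : CGS Agt Loc P} (hG : G.WellFormed) (ℓ : Loc) :
    ∃ mv, G.toGS.ValidMove ℓ mv :=
  ⟨fun a => (hG ℓ a).choose, fun a => (hG ℓ a).choose_spec⟩

theorem exists_out_of_first_move (hG : G.WellFormed) {A : Set Agt} {F : GS.Strat Agt Loc ℕ}
    (hF : G.toGS.StratValid A F) {ℓ : Loc} {mv : Agt → ℕ} (hmv : G.toGS.ValidMove ℓ mv)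
    (hmvF : ∀ a ∈ A, mv a = F [] ℓ a) :
    ∃ ρ, G.toGS.Out A ℓ F ρ ∧ ρ 1 = G.edg ℓ mv := by
  classical
  choose d hd using hG.exists_validMove
  let E : GS.Strat Agt Loc ℕ := fun h ℓ' =>
    if h = [] ∧ ℓ' = ℓ then mv else A.piecewise (F h ℓ') (d ℓ')
  have hE : ∀ h ℓ', G.toGS.ValidMove ℓ' (E h ℓ') := by
    intro h ℓ' a
    by_cases hℓ' : h = [] ∧ ℓ' = ℓ
    · simp only [E]
      rw [if_pos hℓ', hℓ'.2]
      exact hmv a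
    · simp only [E, if_neg hℓ']
      by_cases ha : a ∈ A
      · rw [Set.piecewise_eq_of_mem _ _ _ ha]; exact hF h ℓ' a ha
      · rw [Set.piecewise_eq_of_notMem _ _ _ ha]; exact hd ℓ' a
  have hEF : ∀ h ℓ', ∀ a ∈ A, E h ℓ' a = F h ℓ' a := by
    intro h ℓ' a ha
    by_cases hℓ' : h = [] ∧ ℓ' = ℓ
    · obtain ⟨rfl, rfl⟩ := hℓ'
      simp only [E, if_pos (And.intro rfl rfl)]
      exact hmvF a ha
    · simp only [E, if_neg hℓ', Set.piecewise_eq_of_mem _ _ _ ha]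
  obtain ⟨ρ, hout, hρ⟩ := G.exists_out ℓ E hE hEF
  refine ⟨ρ, hout, ?_⟩
  rw [hρ 0, hout.1, GS.hist_zero]
  simp only [E, if_pos (And.intro rfl rfl)]

theorem sSat_EX_iff (hG : G.WellFormed) {θ : SForm Agt P} {ℓ : Loc} :
    SSat G.toGS (.coal Set.univ (.nxt θ)) ℓ ↔
      ∃ mv, G.toGS.ValidMove ℓ mv ∧ SSat G.toGS θ (G.edg ℓ mv) := by
  constructor
  · rintro ⟨F, hF, hwin⟩
    obtain ⟨ρ, hout, hρ⟩ := G.exists_out ℓ F (fun h ℓ a => hF h ℓ a trivial) (fun _ _ _ _ => rfl)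
    refine ⟨F [] ℓ, fun a => hF [] ℓ a trivial, ?_⟩
    have h1 : ρ 1 = G.edg ℓ (F [] ℓ) := by rw [hρ 0, hout.1, GS.hist_zero]
    rw [← h1]
    exact hwin ρ hout
  · rintro ⟨mv, hmv, hθ⟩
    classical
    choose d hd using hG.exists_validMove
    let F : GS.Strat Agt Loc ℕ := fun _ ℓ' => if ℓ' = ℓ then mv else d ℓ'
    have hF : G.toGS.StratValid Set.univ F := by
      intro h ℓ' a _
      by_cases hℓ' : ℓ' = ℓ
      · simp only [F, hℓ', if_true]
        exact hmv a
      · simp only [F, if_neg hℓ']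
        exact hd ℓ' a
    refine ⟨F, hF, fun ρ hout => ?_⟩
    obtain ⟨mv', -, hagree, h1⟩ := hout.2 0
    have hmv' : mv' = mv := funext fun a => by simp [hagree a trivial, F, hout.1]
    show SSat G.toGS θ (ρ 1)
    rw [h1, hmv', hout.1]
    exact hθ

end CGS

section Reduction

variable (φ : Fin m → BForm (SnVar m n))

theorem snsat2ICGS_wellFormed (hm : 0 < m) : (snsat2ICGS φ).toCGS.WellFormed := by
  rintro ℓ ((_ | _) | (_ | _)) <;> simp [ICGS.toCGS, snsat2ICGS, Finset.nonempty_range_iff, hm.ne']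

theorem snsat2ICGS_validMove_iff {ℓ : SnLoc m} {mv : SnAgt m n → ℕ} :
    (snsat2ICGS φ).toGS.ValidMove ℓ mv ↔ (∀ a ≠ snD, mv a ≤ 1) ∧ mv snD < m := by
  constructor
  · intro h
    refine ⟨fun a ha => ?_, Finset.mem_range.mp (h snD)⟩
    rcases a with p | (k | u)
    · exact (mem_zero_one_iff_le_one _).mp (h (.inl p))
    · exact (mem_zero_one_iff_le_one _).mp (h (.inr (.inl k)))
    · exact absurd rfl ha
  · rintro ⟨h, hD⟩ (p | (k | u))
    · exact (mem_zero_one_iff_le_one _).mpr (h _ nofun)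
    · exact (mem_zero_one_iff_le_one _).mpr (h _ nofun)
    · exact Finset.mem_range.mpr hD

theorem edg_snQbar (i : Fin m) (mv : SnAgt m n → ℕ) : (snsat2ICGS φ).edg (snQbar i) mv = snS i :=
  rfl

theorem edg_snS (i : Fin m) (mv : SnAgt m n → ℕ) : (snsat2ICGS φ).edg (snS i) mv = snQ i :=
  rfl

theorem edg_snBot (mv : SnAgt m n → ℕ) : (snsat2ICGS φ).edg snBot mv = snBot :=
  rfl

theorem edg_snQ_of_D_eq_zero (i : Fin m) {mv : SnAgt m n → ℕ} (hD : mv snD = 0) :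
    (snsat2ICGS φ).edg (snQ i) mv
      = if ((φ i).subst (snSubst i)).eval mv then snTop else snBot := by
  cases hφ : ((φ i).subst (snSubst i)).eval mv
  · exact ICGS.edg_eq_of_trans_eq_append _ (pre := [_, _]) rfl
      ⟨_, List.mem_cons_of_mem _ (List.mem_singleton_self _), by simp [MoveForm.eval, hD]⟩
      (by simp [MoveForm.eval, hφ])
  · exact ICGS.edg_eq_of_trans_eq_append _ (pre := [_]) rfl
      ⟨_, List.mem_singleton_self _, by simp [MoveForm.eval, hD, hφ]⟩ (by simp)

theorem edg_snQ_of_challenge {i k : Fin m} (hk : k < i) {mv : SnAgt m n → ℕ}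
    (hD : mv snD = k + 1) (hC : mv (snC k) ≤ 1) :
    (snsat2ICGS φ).edg (snQ i) mv = if mv (snC k) = 1 then snQ k else snQbar k := by
  have hk' : k ∈ (List.finRange m).filter (fun k' : Fin m => decide ((k' : ℕ) < i)) := by
    simpa using hk
  refine ICGS.edg_eq_of_trans_eq_append _ (post := [_]) rfl ?_ ?_
  · rcases Nat.le_one_iff_eq_zero_or_eq_one.mp hC with hC | hC
    · refine ⟨_, List.mem_append_right _ (List.mem_flatMap.mpr
        ⟨k, hk', List.mem_cons_of_mem _ (List.mem_singleton_self _)⟩), ?_⟩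
      simp only [MoveForm.eval, hD, BEq.rfl, Bool.true_and, beq_iff_eq]
      exact hC
    · refine ⟨_, List.mem_append_right _ (List.mem_flatMap.mpr ⟨k, hk', List.mem_cons_self ..⟩), ?_⟩
      simp only [MoveForm.eval, hD, BEq.rfl, Bool.true_and, beq_iff_eq]
      exact hC
  · simp only [List.mem_append, List.mem_cons, List.mem_flatMap, List.not_mem_nil, or_false]
    rintro e ((rfl | rfl) | ⟨k', -, rfl | rfl⟩) hfire <;>
      simp only [MoveForm.eval, hD, Nat.reduceBeqDiff, Bool.false_and, Bool.false_eq_true,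
        Bool.and_eq_true, beq_iff_eq] at hfire
    all_goals
      obtain rfl : k' = k := Fin.ext (by omega)
      simp [snC, hfire.2]

theorem edg_snQ_of_no_challenge (i : Fin m) {mv : SnAgt m n → ℕ} (hD₀ : mv snD ≠ 0)
    (hD : ∀ k < i, mv snD ≠ k + 1) :
    (snsat2ICGS φ).edg (snQ i) mv = snTop := by
  refine ICGS.edg_eq_of_trans_eq_append _ (List.append_nil _).symm
    ⟨(.tt, snTop), by simp [snsat2ICGS, snQ], rfl⟩ ?_
  simp only [snsat2ICGS, snQ, List.mem_append, List.mem_cons, List.mem_flatMap, List.mem_filter,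
    List.mem_finRange, true_and, decide_eq_true_eq, List.not_mem_nil, or_false]
  rintro e (((rfl | rfl) | ⟨k', hk', rfl | rfl⟩) | rfl) hfire <;>
    simp only [MoveForm.eval, Bool.and_eq_true, beq_iff_eq, hD₀, false_and] at hfire
  all_goals first | rfl | exact absurd hfire.1 (hD k' hk')

theorem lab_snQ (i : Fin m) : (snsat2ICGS (n := n) φ).toGS.lab (snQ i) = ∅ := rfl

theorem lab_snS (i : Fin m) : (snsat2ICGS (n := n) φ).toGS.lab (snS i) = {2} := rfl

theorem lab_snBot : (snsat2ICGS (n := n) φ).toGS.lab snBot = {1} := rfl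

theorem two_not_mem_lab_edg_snQ (i : Fin m) (mv : SnAgt m n → ℕ) :
    (2 : Fin 3) ∉ (snsat2ICGS φ).toGS.lab ((snsat2ICGS φ).edg (snQ i) mv) := by
  rcases ICGS.edg_mem_targets _ (snQ i) mv with h | h
  · obtain ⟨e, he, hedg⟩ := List.mem_map.mp h
    rw [← hedg]
    simp only [snsat2ICGS, snQ, List.mem_append, List.mem_cons, List.mem_flatMap,
      List.not_mem_nil, or_false] at he
    rcases he with ((rfl | rfl) | ⟨k', -, rfl | rfl⟩) | rfl <;>
      simp [ICGS.toGS, ICGS.toCGS, CGS.toGS, snsat2ICGS, snTop, snBot, snQ, snQbar]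
  · rw [h]
    exact id

def snVal (gx gy : Fin n → Bool) (vz : Fin m → Bool) : SnVar m n → Bool
  | .inl (.inl j) => gx j
  | .inl (.inr j) => gy j
  | .inr k => vz k

theorem snA_mem_snCoal (i : Fin m) (j : Fin n) : snA i j ∈ (snCoal : Set (SnAgt m n)) :=
  .inl ⟨(i, j), rfl⟩

theorem snC_mem_snCoal (k : Fin m) : snC k ∈ (snCoal : Set (SnAgt m n)) :=
  .inr ⟨k, rfl⟩

theorem le_one_of_stratValid {F : GS.Strat (SnAgt m n) (SnLoc m) ℕ}
    (hF : (snsat2ICGS φ).toGS.StratValid snCoal F) (h : List (SnLoc m)) (ℓ : SnLoc m)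
    {a : SnAgt m n} (ha : a ∈ snCoal) : F h ℓ a ≤ 1 := by
  have hv := hF h ℓ a ha
  rcases ha with ⟨x, rfl⟩ | ⟨k, rfl⟩ <;> exact (mem_zero_one_iff_le_one _).mp hv

theorem stratValid_snFI (vz : Fin m → Bool) (vx : Fin m → Fin n → Bool) :
    (snsat2ICGS φ).toGS.StratValid snCoal (snFI vz vx) := by
  rintro h ℓ a (⟨⟨i, j⟩, rfl⟩ | ⟨k, rfl⟩)
  · by_cases hv : vx i j <;> simp [ICGS.toGS, ICGS.toCGS, CGS.toGS, snsat2ICGS, snFI, hv]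
  · by_cases hv : vz k <;> simp [ICGS.toGS, ICGS.toCGS, CGS.toGS, snsat2ICGS, snFI, hv]

theorem snFI_memoryless (vz : Fin m → Bool) (vx : Fin m → Fin n → Bool) :
    GS.Memoryless (snFI vz vx) :=
  fun _ _ _ _ => rfl

/-- The coalition move `f` completed by the moves `y` of the agents `B_i^j` and `d` of `D`. -/
def snComplete (f : SnAgt m n → ℕ) (y : Fin m × Fin n → Bool) (d : ℕ) : SnAgt m n → ℕ
  | .inl (.inr p) => if y p then 1 else 0
  | .inr (.inr _) => d
  | a => f a

theorem snComplete_eq_of_mem {f : SnAgt m n → ℕ} {y : Fin m × Fin n → Bool} {d : ℕ}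
    {a : SnAgt m n} (ha : a ∈ snCoal) : snComplete f y d a = f a := by
  rcases ha with ⟨x, rfl⟩ | ⟨k, rfl⟩ <;> rfl

theorem validMove_snComplete {F : GS.Strat (SnAgt m n) (SnLoc m) ℕ}
    (hF : (snsat2ICGS φ).toGS.StratValid snCoal F) (h : List (SnLoc m)) (ℓ ℓ' : SnLoc m)
    (y : Fin m × Fin n → Bool) {d : ℕ} (hd : d < m) :
    (snsat2ICGS φ).toGS.ValidMove ℓ' (snComplete (F h ℓ) y d) := by
  refine (snsat2ICGS_validMove_iff φ).mpr ⟨fun a ha => ?_, hd⟩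
  rcases a with (x | p) | (k | u)
  · exact le_one_of_stratValid φ hF h ℓ (.inl ⟨x, rfl⟩)
  · simp only [snComplete]; split <;> omega
  · exact le_one_of_stratValid φ hF h ℓ (.inr ⟨k, rfl⟩)
  · exact absurd rfl ha

theorem sSat_snEX_iff (hm : 0 < m) {θ : SForm (SnAgt m n) (Fin 3)} {ℓ : SnLoc m} :
    SSat (snsat2ICGS φ).toGS (snEX θ) ℓ ↔
      ∃ mv, (snsat2ICGS φ).toGS.ValidMove ℓ mv ∧
        SSat (snsat2ICGS φ).toGS θ ((snsat2ICGS φ).edg ℓ mv) :=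
  (snsat2ICGS φ).toCGS.sSat_EX_iff (snsat2ICGS_wellFormed φ hm)

theorem sSat_snEX_iff_of_edg_eq (hm : 0 < m) {θ : SForm (SnAgt m n) (Fin 3)} {ℓ ℓ' : SnLoc m}
    (h : ∀ mv, (snsat2ICGS φ).edg ℓ mv = ℓ') :
    SSat (snsat2ICGS φ).toGS (snEX θ) ℓ ↔ SSat (snsat2ICGS φ).toGS θ ℓ' := by
  rw [sSat_snEX_iff φ hm]
  obtain ⟨mv, hmv⟩ := (snsat2ICGS_wellFormed φ hm).exists_validMove ℓ
  exact ⟨fun ⟨mv, _, hθ⟩ => h mv ▸ hθ, fun hθ => ⟨mv, hmv, (h mv).symm ▸ hθ⟩⟩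

/-- The right-hand side of the until in `snPsiPath θ`. -/
def snGoal (θ : SForm (SnAgt m n) (Fin 3)) : SForm (SnAgt m n) (Fin 3) :=
  .sor (.atom 0) (snEX (SForm.sand (.atom 2) (snEX (.snot θ))))

theorem sSat_snGoal_snTop (θ : SForm (SnAgt m n) (Fin 3)) :
    SSat (snsat2ICGS φ).toGS (snGoal θ) snTop :=
  .inl rfl

theorem not_sSat_snGoal (hm : 0 < m) (θ : SForm (SnAgt m n) (Fin 3)) {ℓ : SnLoc m}
    (h₀ : (0 : Fin 3) ∉ (snsat2ICGS φ).toGS.lab ℓ)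
    (h₂ : ∀ mv, (2 : Fin 3) ∉ (snsat2ICGS φ).toGS.lab ((snsat2ICGS φ).edg ℓ mv)) :
    ¬ SSat (snsat2ICGS φ).toGS (snGoal θ) ℓ := by
  rintro (h | h)
  · exact h₀ h
  · obtain ⟨mv, -, hs⟩ := (sSat_snEX_iff φ hm).mp h
    exact h₂ mv (sSat_sand.mp hs).1

theorem sSat_snGoal_snQbar_iff (hm : 0 < m) (θ : SForm (SnAgt m n) (Fin 3)) (j : Fin m) :
    SSat (snsat2ICGS φ).toGS (snGoal θ) (snQbar j) ↔ ¬ SSat (snsat2ICGS φ).toGS θ (snQ j) := by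
  simp only [snGoal, SSat, sSat_snEX_iff_of_edg_eq φ hm (edg_snQbar φ j), sSat_sand,
    sSat_snEX_iff_of_edg_eq φ hm (edg_snS φ j)]
  exact (or_iff_right id).trans (and_iff_right rfl)

theorem not_pSat_snPsiPath_of_snBot (hm : 0 < m) (θ : SForm (SnAgt m n) (Fin 3))
    {A : Set (SnAgt m n)} {F : GS.Strat (SnAgt m n) (SnLoc m) ℕ} {i : Fin m} {ρ : ℕ → SnLoc m}
    (hout : (snsat2ICGS φ).toGS.Out A (snQ i) F ρ) (h₁ : ρ 1 = snBot) :
    ¬ PSat (snsat2ICGS φ).toGS (snPsiPath θ) ρ := by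
  have hbot : ∀ t, ρ (t + 1) = snBot := by
    intro t
    induction t with
    | zero => exact h₁
    | succ t ih => exact CGS.out_succ_eq hout (t + 1) (fun mv => ih ▸ edg_snBot φ mv)
  rintro ⟨t, hgoal, -⟩
  cases t with
  | zero =>
    rw [hout.1] at hgoal
    exact not_sSat_snGoal φ hm θ id (two_not_mem_lab_edg_snQ φ i) hgoal
  | succ t =>
    rw [hbot t] at hgoal
    exact not_sSat_snGoal φ hm θ (by simp [lab_snBot]) (fun mv => by simp [edg_snBot, lab_snBot])
      hgoal

theorem edg_snQ_of_snFI {vz : Fin m → Bool} {vx : Fin m → Fin n → Bool}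
    (hx : ∀ i : Fin m, vz i = true → ∀ gy : Fin n → Bool,
      (φ i).eval (snVal (vx i) gy vz) = true)
    {j : Fin m} (hj : vz j = true) {h : List (SnLoc m)} {ℓ : SnLoc m} {mv : SnAgt m n → ℕ}
    (hagree : ∀ a ∈ snCoal, mv a = snFI vz vx h ℓ a) :
    (snsat2ICGS φ).edg (snQ j) mv = snTop ∨
      ∃ k < j, (snsat2ICGS φ).edg (snQ j) mv = if vz k then snQ k else snQbar k := by
  have hA : ∀ l, mv (snA j l) = if vx j l then 1 else 0 :=
    fun l => hagree _ (snA_mem_snCoal j l)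
  have hC : ∀ k, mv (snC k) = if vz k then 1 else 0 :=
    fun k => hagree _ (snC_mem_snCoal k)
  by_cases hD₀ : mv snD = 0
  · have heval : ((φ j).subst (snSubst j)).eval mv = true := by
      rw [BForm.eval_subst]
      convert hx j hj (fun l => mv (snB j l) == 1) using 2
      funext v
      rcases v with (l | l) | k
      · exact (congrArg (· == 1) (hA l)).trans (ite_one_zero_beq_one _)
      · rfl
      · exact (congrArg (· == 1) (hC k)).trans (ite_one_zero_beq_one _)
    exact .inl (by rw [edg_snQ_of_D_eq_zero φ j hD₀, heval, if_pos rfl])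
  by_cases hch : ∃ k < j, mv snD = k + 1
  · obtain ⟨k, hkj, hD⟩ := hch
    refine .inr ⟨k, hkj, ?_⟩
    rw [edg_snQ_of_challenge φ hkj hD (by rw [hC k]; split <;> omega), hC k]
    cases vz k <;> rfl
  · push Not at hch
    exact .inl (edg_snQ_of_no_challenge φ j hD₀ hch)

theorem snFI_out_reaches_snTop_or_snQbar {vz : Fin m → Bool} {vx : Fin m → Fin n → Bool}
    (hx : ∀ i : Fin m, vz i = true → ∀ gy : Fin n → Bool,
      (φ i).eval (snVal (vx i) gy vz) = true)
    (j : Fin m) (hj : vz j = true) {ρ : ℕ → SnLoc m}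
    (hout : (snsat2ICGS φ).toGS.Out snCoal (snQ j) (snFI vz vx) ρ) :
    ∃ t, (ρ t = snTop ∨ ∃ j' < j, vz j' = false ∧ ρ t = snQbar j') ∧
      ∀ t' < t, ρ t' ∈ Set.range snQ := by
  induction j using WellFoundedLT.induction generalizing ρ with
  | ind j ih =>
  obtain ⟨mv, -, hagree, h₁⟩ := hout.2 0
  replace h₁ : ρ 1 = (snsat2ICGS φ).edg (snQ j) mv := hout.1 ▸ h₁
  have hq₀ : ∀ t' < 1, ρ t' ∈ Set.range snQ :=
    fun t' ht' => ⟨j, by rw [Nat.lt_one_iff.mp ht', hout.1]⟩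
  rcases edg_snQ_of_snFI φ hx hj hagree with htop | ⟨k, hkj, hk⟩
  · exact ⟨1, .inl (h₁.trans htop), hq₀⟩
  cases hvz : vz k
  · exact ⟨1, .inr ⟨k, hkj, hvz, by rw [h₁, hk, hvz]; rfl⟩, hq₀⟩
  · rw [hvz, if_pos rfl, ← h₁] at hk
    obtain ⟨t, hgoal, hpre⟩ := ih k hkj hvz (hk ▸ hout.tail (snFI_memoryless vz vx))
    refine ⟨t + 1, hgoal.imp_right fun ⟨j', hj', h⟩ => ⟨j', hj'.trans hkj, h⟩, ?_⟩
    rintro (_ | t') ht'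
    · exact ⟨j, hout.1.symm⟩
    · exact hpre t' (by omega)

theorem snFI_witnesses (hm : 0 < m) {vz : Fin m → Bool} {vx : Fin m → Fin n → Bool}
    (hx : ∀ i : Fin m, vz i = true → ∀ gy : Fin n → Bool,
      (φ i).eval (snVal (vx i) gy vz) = true)
    {i : Fin m} {k : ℕ} (hik : (i : ℕ) ≤ k)
    (ih : ∀ j < i, ∀ k : ℕ, (j : ℕ) ≤ k →
      (SSat (snsat2ICGS φ).toGS (snPsi (k + 1)) (snQ j) ↔ vz j = true))
    (hi : vz i = true) :
    (snsat2ICGS φ).toGS.Witnesses snCoal (snFI vz vx) (snPsiPath (snPsi k)) (snQ i) := by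
  refine ⟨stratValid_snFI φ vz vx, fun ρ hout => ?_⟩
  obtain ⟨t, hgoal, hpre⟩ := snFI_out_reaches_snTop_or_snQbar φ hx i hi hout
  refine ⟨t, ?_, fun t' ht' => ?_⟩
  · rcases hgoal with h | ⟨j, hj, hvz, h⟩
    · rw [h]
      exact sSat_snGoal_snTop φ _
    · obtain ⟨k, rfl⟩ : ∃ k', k = k' + 1 := ⟨k - 1, by omega⟩
      rw [h]
      refine (sSat_snGoal_snQbar_iff φ hm _ j).mpr ?_
      rw [ih j hj k (by omega), hvz]
      exact Bool.false_ne_true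
  · obtain ⟨j, hj⟩ := hpre t' ht'
    rw [← hj]
    exact id

theorem vz_eq_false_of_move_snC_eq_zero (hm : 0 < m) {vz : Fin m → Bool} {i j : Fin m} {k : ℕ}
    (hik : (i : ℕ) ≤ k)
    (ih : ∀ j < i, ∀ k : ℕ, (j : ℕ) ≤ k →
      (SSat (snsat2ICGS φ).toGS (snPsi (k + 1)) (snQ j) ↔ vz j = true))
    {F : GS.Strat (SnAgt m n) (SnLoc m) ℕ}
    (hw : (snsat2ICGS φ).toGS.Witnesses snCoal F (snPsiPath (snPsi k)) (snQ i))
    (hj : j < i) (hC : F [] (snQ i) (snC j) = 0) : vz j = false := by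
  by_contra hvz
  rw [Bool.not_eq_false] at hvz
  let mv := snComplete (F [] (snQ i)) (fun _ => false) (j + 1)
  have hmvC : mv (snC j) = 0 := hC
  obtain ⟨ρ, hout, h₁⟩ := (snsat2ICGS φ).toCGS.exists_out_of_first_move
    (snsat2ICGS_wellFormed φ hm) hw.1
    (validMove_snComplete φ hw.1 [] (snQ i) (snQ i) _ (d := j + 1) (by omega))
    (fun a ha => snComplete_eq_of_mem (f := F [] (snQ i)) (y := fun _ => false) ha)
  replace h₁ : ρ 1 = snQbar j := by
    rw [h₁]
    exact (edg_snQ_of_challenge φ hj rfl (hmvC.trans_le zero_le_one)).trans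
      (if_neg fun h => zero_ne_one (hmvC.symm.trans h))
  have h₂ : ρ 2 = snS j := CGS.out_succ_eq hout 1 (fun mv => h₁ ▸ edg_snQbar φ j mv)
  have h₃ : ρ 3 = snQ j := CGS.out_succ_eq hout 2 (fun mv => h₂ ▸ edg_snS φ j mv)
  obtain ⟨k, rfl⟩ : ∃ k', k = k' + 1 := ⟨k - 1, by omega⟩
  obtain ⟨t, hgoal, hpre⟩ := hw.2 ρ hout
  -- along `q_i, q̄_j, s_j, q_j, …` the until can only be fulfilled at `q̄_j`, needing `q_j ⊭ ψ`
  rcases t with _ | _ | _ | t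
  · rw [hout.1] at hgoal
    exact not_sSat_snGoal φ hm _ id (two_not_mem_lab_edg_snQ φ i) hgoal
  · rw [h₁] at hgoal
    exact (sSat_snGoal_snQbar_iff φ hm _ j).mp hgoal ((ih j hj k (by omega)).mpr hvz)
  · rw [h₂] at hgoal
    exact not_sSat_snGoal φ hm _ (by simp [lab_snS]) (fun mv => by simp [edg_snS, lab_snQ]) hgoal
  · exact hpre 2 (by omega) (by rw [h₂]; rfl)

theorem vz_eq_true_of_move_snC_eq_one (hm : 0 < m) {vz : Fin m → Bool} {i j : Fin m} {k : ℕ}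
    (hik : (i : ℕ) ≤ k)
    (ih : ∀ j < i, ∀ k : ℕ, (j : ℕ) ≤ k →
      (SSat (snsat2ICGS φ).toGS (snPsi (k + 1)) (snQ j) ↔ vz j = true))
    {F : GS.Strat (SnAgt m n) (SnLoc m) ℕ}
    (hw : (snsat2ICGS φ).toGS.Witnesses snCoal F (snPsiPath (snPsi k)) (snQ i))
    (hj : j < i) (hC : F [] (snQ i) (snC j) = 1) : vz j = true := by
  let mv := snComplete (F [] (snQ i)) (fun _ => false) (j + 1)
  have hmvC : mv (snC j) = 1 := hC
  have hstep : snQ j ∈ (snsat2ICGS φ).toGS.Next (snQ i) snCoal (F [] (snQ i)) :=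
    (CGS.mem_next_iff _).mpr ⟨mv, validMove_snComplete φ hw.1 [] (snQ i) (snQ i) _ (by omega),
      fun a ha => snComplete_eq_of_mem ha,
      ((edg_snQ_of_challenge φ hj rfl hmvC.le).trans (if_pos hmvC)).symm⟩
  have hgoal : ¬ SSat (snsat2ICGS φ).toGS (snGoal (snPsi k)) (snQ i) :=
    not_sSat_snGoal φ hm _ id (two_not_mem_lab_edg_snQ φ i)
  exact (ih j hj k (by omega)).mp ⟨_, hw.tail hgoal hstep⟩

theorem move_snC_beq_one_eq (hm : 0 < m) {vz : Fin m → Bool} {i j : Fin m} {k : ℕ}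
    (hik : (i : ℕ) ≤ k)
    (ih : ∀ j < i, ∀ k : ℕ, (j : ℕ) ≤ k →
      (SSat (snsat2ICGS φ).toGS (snPsi (k + 1)) (snQ j) ↔ vz j = true))
    {F : GS.Strat (SnAgt m n) (SnLoc m) ℕ}
    (hw : (snsat2ICGS φ).toGS.Witnesses snCoal F (snPsiPath (snPsi k)) (snQ i))
    (hj : j < i) : (F [] (snQ i) (snC j) == 1) = vz j := by
  rcases Nat.le_one_iff_eq_zero_or_eq_one.mp
    (le_one_of_stratValid φ hw.1 [] (snQ i) (snC_mem_snCoal j)) with hC | hC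
  · rw [hC, vz_eq_false_of_move_snC_eq_zero φ hm hik ih hw hj hC]
    rfl
  · rw [hC, vz_eq_true_of_move_snC_eq_one φ hm hik ih hw hj hC]
    rfl

theorem vz_eq_true_of_witnesses (hm : 0 < m)
    (hdep : ∀ (i : Fin m) (g g' : SnVar m n → Bool),
      (∀ v : Fin n ⊕ Fin n, g (.inl v) = g' (.inl v)) →
      (∀ k : Fin m, (k : ℕ) < (i : ℕ) → g (.inr k) = g' (.inr k)) →
      (φ i).eval g = (φ i).eval g')
    {vz : Fin m → Bool}
    (hz : ∀ i : Fin m, vz i = true ↔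
      ∃ gx : Fin n → Bool, ∀ gy : Fin n → Bool, (φ i).eval (snVal gx gy vz) = true)
    {i : Fin m} {k : ℕ} (hik : (i : ℕ) ≤ k)
    (ih : ∀ j < i, ∀ k : ℕ, (j : ℕ) ≤ k →
      (SSat (snsat2ICGS φ).toGS (snPsi (k + 1)) (snQ j) ↔ vz j = true))
    {F : GS.Strat (SnAgt m n) (SnLoc m) ℕ}
    (hw : (snsat2ICGS φ).toGS.Witnesses snCoal F (snPsiPath (snPsi k)) (snQ i)) :
    vz i = true := by
  rw [hz i]
  refine ⟨fun l => F [] (snQ i) (snA i l) == 1, fun gy => ?_⟩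
  by_contra hfalse
  let mv := snComplete (F [] (snQ i)) (fun p => gy p.2) 0
  obtain ⟨ρ, hout, h₁⟩ := (snsat2ICGS φ).toCGS.exists_out_of_first_move
    (snsat2ICGS_wellFormed φ hm) hw.1 (validMove_snComplete φ hw.1 [] (snQ i) (snQ i) _ hm)
    (fun a ha => snComplete_eq_of_mem (f := F [] (snQ i)) (y := fun p => gy p.2) (d := 0) ha)
  have heval : ((φ i).subst (snSubst i)).eval mv =
      (φ i).eval (snVal (fun l => F [] (snQ i) (snA i l) == 1) gy vz) := by
    rw [BForm.eval_subst]
    refine hdep i _ _ (fun v => ?_) (fun j hj => move_snC_beq_one_eq φ hm hik ih hw hj)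
    rcases v with l | l
    · rfl
    · exact ite_one_zero_beq_one (gy l)
  replace h₁ : ρ 1 = (snsat2ICGS φ).edg (snQ i) mv := h₁
  rw [edg_snQ_of_D_eq_zero φ i rfl, heval, if_neg hfalse] at h₁
  exact not_pSat_snPsiPath_of_snBot φ hm _ hout h₁ (hw.2 ρ hout)

theorem sSat_snPsi_iff (hm : 0 < m)
    (hdep : ∀ (i : Fin m) (g g' : SnVar m n → Bool),
      (∀ v : Fin n ⊕ Fin n, g (.inl v) = g' (.inl v)) →
      (∀ k : Fin m, (k : ℕ) < (i : ℕ) → g (.inr k) = g' (.inr k)) →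
      (φ i).eval g = (φ i).eval g')
    {vz : Fin m → Bool} {vx : Fin m → Fin n → Bool}
    (hz : ∀ i : Fin m, vz i = true ↔
      ∃ gx : Fin n → Bool, ∀ gy : Fin n → Bool, (φ i).eval (snVal gx gy vz) = true)
    (hx : ∀ i : Fin m, vz i = true → ∀ gy : Fin n → Bool,
      (φ i).eval (snVal (vx i) gy vz) = true)
    (i : Fin m) (k : ℕ) (hik : (i : ℕ) ≤ k) :
    SSat (snsat2ICGS φ).toGS (snPsi (k + 1)) (snQ i) ↔ vz i = true := by
  induction i using WellFoundedLT.induction generalizing k with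
  | ind i ih =>
  exact ⟨fun ⟨_, hw⟩ => vz_eq_true_of_witnesses φ hm hdep hz hik ih hw,
    fun hi => ⟨_, snFI_witnesses φ hm hx hik ih hi⟩⟩

end Reduction

/-- For an SNSAT₂ instance (with `v_I` given by `vz`, `vx`; hypotheses `hdep`,
`hz`, `hx` state that `φ_i` only depends on `X_i ∪ Y_i ∪ {z_k | k < i}`, that
`vz` is the unique valuation solving the instance and that `vx i` witnesses
`z_i` whenever `vz i = true`), for all `i ≤ m` and `k ≥ i`, the following are
equivalent: (a) `q_i ⊨ ψ_k`; (b) the strategies `f_I` witness `q_i ⊨ ψ_k`;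
(c) `z_i` evaluates to `⊤` in `v_I`. -/
theorem snsat2_reduction_correct
    (m n : ℕ) (hm : 0 < m) (φ : Fin m → BForm (SnVar m n))
    (hdep : ∀ (i : Fin m) (g g' : SnVar m n → Bool),
      (∀ v : Fin n ⊕ Fin n, g (.inl v) = g' (.inl v)) →
      (∀ k : Fin m, (k : ℕ) < (i : ℕ) → g (.inr k) = g' (.inr k)) →
      (φ i).eval g = (φ i).eval g')
    (vz : Fin m → Bool) (vx : Fin m → Fin n → Bool)
    (hz : ∀ i : Fin m, vz i = true ↔
      ∃ gx : Fin n → Bool, ∀ gy : Fin n → Bool,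
        (φ i).eval (fun v =>
          match v with
          | .inl (.inl j) => gx j
          | .inl (.inr j) => gy j
          | .inr k => vz k) = true)
    (hx : ∀ i : Fin m, vz i = true → ∀ gy : Fin n → Bool,
      (φ i).eval (fun v =>
        match v with
        | .inl (.inl j) => vx i j
        | .inl (.inr j) => gy j
        | .inr k => vz k) = true) :
    ∀ (i : Fin m) (k : ℕ), (i : ℕ) ≤ k →
      ((SSat (snsat2ICGS φ).toGS (snPsi (k + 1)) (snQ i) ↔ vz i = true) ∧
       (((snsat2ICGS φ).toGS.StratValid snCoal (snFI vz vx) ∧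
          ∀ ρ : ℕ → SnLoc m,
            (snsat2ICGS φ).toGS.Out snCoal (snQ i) (snFI vz vx) ρ →
              PSat (snsat2ICGS φ).toGS (snPsiPath (snPsi k)) ρ) ↔
        vz i = true)) := by
  intro i k hik
  have hψ : ∀ j : Fin m, ∀ k : ℕ, (j : ℕ) ≤ k →
      (SSat (snsat2ICGS φ).toGS (snPsi (k + 1)) (snQ j) ↔ vz j = true) :=
    sSat_snPsi_iff φ hm hdep hz hx
  exact ⟨hψ i k hik, fun hw => (hψ i k hik).mp ⟨_, hw⟩,
    snFI_witnesses φ hm hx hik (fun j _ => hψ j)⟩
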